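/- arXiv:1906.05511 — 4 statements merged into one kernel-verified Lean document; each statement's English description precedes it below -/
import Mathlib

section
/- If c : ℝ → g is differentiable with |c(0)| = 1 and the components ψ_j satisfy ψ_j' = Σ_{k,i} c_{ij}^k ψ_i ψ_k where the structure constants satisfy c_{ij}^k = -c_{ji}^k (skew-symmetry in the lower indices), and u(t) = Σ_{i=1}^r ψ_i(t) e_i, then |u(t)| = 1 for all t. -/
/-!
`u` is differentiable with `u' = (ψ_j')_{j < r}`, and `⟪u, u'⟫ = Σ_k ψ_k Σ_{i,j < r} c_{ij}^k ψ_i ψ_j`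
vanishes because each inner quadratic form has a skew-symmetric coefficient matrix. Hence
`‖u‖²` has zero derivative and is constant.
-/

open Real Finset

open scoped InnerProductSpace

theorem PiLp.hasDerivAt_of_forall_apply {𝕜 : Type*} [NontriviallyNormedField 𝕜] {ι : Type*}
    [Fintype ι] {p : ENNReal} [Fact (1 ≤ p)] {β : ι → Type*} [∀ i, NormedAddCommGroup (β i)]
    [∀ i, NormedSpace 𝕜 (β i)] {f : 𝕜 → PiLp p β} {f' : PiLp p β} {x : 𝕜}
    (h : ∀ i, HasDerivAt (fun t => f t i) (f' i) x) : HasDerivAt f f' x :=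
  (PiLp.continuousLinearEquiv p 𝕜 β).symm.hasFDerivAt.comp_hasDerivAt x (hasDerivAt_pi.2 h)

theorem norm_eq_norm_zero_of_inner_deriv_eq_zero {F : Type*} [NormedAddCommGroup F]
    [InnerProductSpace ℝ F] {v v' : ℝ → F} (hv : ∀ t, HasDerivAt v (v' t) t)
    (horth : ∀ t, ⟪v t, v' t⟫_ℝ = 0) (t : ℝ) : ‖v t‖ = ‖v 0‖ := by
  have hsq : ∀ t, HasDerivAt (‖v ·‖ ^ 2) 0 t := fun t => by
    simpa [horth t] using (hv t).norm_sq
  have := is_const_of_deriv_eq_zero (fun t => (hsq t).differentiableAt) (fun t => (hsq t).deriv) t 0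
  exact (sq_eq_sq₀ (norm_nonneg _) (norm_nonneg _)).1 this

theorem sum_mul_sum_sum_eq_zero_of_skew {ι R : Type*} [Fintype ι] [CommRing R]
    [NoZeroDivisors R] [CharZero R] {c : ι → ι → ι → R} (hskew : ∀ i j k, c i j k = -c j i k)
    (w y : ι → R) : ∑ j, w j * ∑ k, ∑ i, c i j k * w i * y k = 0 := by
  have hquad : ∀ k, ∑ i, ∑ j, c i j k * w i * w j = 0 := fun k => by
    refine CharZero.eq_neg_self_iff.1 ?_
    conv_lhs => rw [Finset.sum_comm]
    simp only [← Finset.sum_neg_distrib]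
    refine Finset.sum_congr rfl fun j _ => Finset.sum_congr rfl fun i _ => ?_
    rw [hskew i j k]; ring
  calc ∑ j, w j * ∑ k, ∑ i, c i j k * w i * y k
      = ∑ k, y k * ∑ i, ∑ j, c i j k * w i * w j := by
        simp only [Finset.mul_sum]
        conv_lhs => rw [Finset.sum_comm]
        refine Finset.sum_congr rfl fun k _ => ?_
        conv_lhs => rw [Finset.sum_comm]
        exact Finset.sum_congr rfl fun i _ => Finset.sum_congr rfl fun j _ => by ring
    _ = 0 := by simp [hquad]

theorem control_norm_const_general {n r : ℕ}
    (c : Fin n → Fin n → Fin n → ℝ)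
    (hskew : ∀ i j k, c i j k = - c j i k)
    (ψ : Fin n → ℝ → ℝ)
    (hode : ∀ j : Fin n, ∀ t : ℝ, HasDerivAt (ψ j)
      (∑ k : Fin n, ∑ i : Fin n,
        if (i : ℕ) < r then c i j k * ψ i t * ψ k t else 0) t)
    (u : ℝ → EuclideanSpace ℝ (Fin n))
    (hu : ∀ t, ∀ i : Fin n, u t i = if (i : ℕ) < r then ψ i t else 0)
    (hnorm0 : ‖u 0‖ = 1) :
    ∀ t : ℝ, ‖u t‖ = 1 := by
  set u' : ℝ → EuclideanSpace ℝ (Fin n) := fun t => WithLp.toLp 2 fun j =>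
    if (j : ℕ) < r then ∑ k, ∑ i, c i j k * u t i * ψ k t else 0
  have hderiv : ∀ t, HasDerivAt u (u' t) t := fun t => PiLp.hasDerivAt_of_forall_apply fun j => by
    simp only [u', hu]
    split_ifs
    · simpa only [mul_ite, ite_mul, mul_zero, zero_mul] using hode j t
    · exact hasDerivAt_const t 0
  have horth : ∀ t, ⟪u t, u' t⟫_ℝ = 0 := fun t => by
    rw [← sum_mul_sum_sum_eq_zero_of_skew hskew (u t) (ψ · t), PiLp.inner_apply]
    refine Finset.sum_congr rfl fun j _ => ?_
    simp only [u', hu]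
    split_ifs <;> simp [mul_comm]
  intro t
  rw [norm_eq_norm_zero_of_inner_deriv_eq_zero hderiv horth t, hnorm0]

/-- Conservation law `|u(t)| ≡ 1` for the normal geodesic control equations. -/
theorem control_norm_const {n r : ℕ} (hr : r ≤ n)
    (c : Fin n → Fin n → Fin n → ℝ)
    (hskew : ∀ i j k, c i j k = - c j i k)
    (ψ : Fin n → ℝ → ℝ)
    (hode : ∀ j : Fin n, ∀ t : ℝ, HasDerivAt (ψ j)
      (∑ k : Fin n, ∑ i : Fin n,
        if (i : ℕ) < r then c i j k * ψ i t * ψ k t else 0) t)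
    (u : ℝ → EuclideanSpace ℝ (Fin n))
    (hu : ∀ t, ∀ i : Fin n, u t i = if (i : ℕ) < r then ψ i t else 0)
    (hnorm0 : ‖u 0‖ = 1) :
    ∀ t : ℝ, ‖u t‖ = 1 :=
  control_norm_const_general c hskew ψ hode u hu hnorm0
end

section
/- The functions ψ_i(t) = φ_i/(cosh t − φ_n sinh t) for i = 1,...,n−1 and ψ_n(t) = (φ_n cosh t − sinh t)/(cosh t − φ_n sinh t) solve the system ψ_i' = ψ_i·ψ_n (i = 1,...,n−1), ψ_n' = −Σ_{i=1}^{n−1} ψ_i², with initial data ψ_i(0) = φ_i and Σ_{i=1}^n φ_i² = 1. -/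
open Real Finset

/-! With `D = cosh t − a sinh t` and `N = a cosh t − sinh t` one has `D' = −N`, `N' = −D`
and `D² − N² = 1 − a²`. Hence `(c / D)' = (c / D)(N / D)` and
`(N / D)' = (N² − D²) / D² = −(1 − a²) / D²`, which for `a = φ_n`, `1 − a² = ∑ φ_i²` is
`−∑ ψ_i²`. The denominator `D` stays positive because `|a sinh t| ≤ |sinh t| < cosh t`. -/

namespace Real

theorem abs_sinh_lt_cosh (t : ℝ) : |sinh t| < cosh t :=
  abs_lt_of_sq_lt_sq (by nlinarith [cosh_sq_sub_sinh_sq t]) (cosh_pos t).le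

theorem cosh_sub_mul_sinh_pos {a : ℝ} (ha : a ^ 2 ≤ 1) (t : ℝ) : 0 < cosh t - a * sinh t := by
  have hmul : |a * sinh t| ≤ |sinh t| := by
    rw [abs_mul]
    exact mul_le_of_le_one_left (abs_nonneg _) ((sq_le_one_iff_abs_le_one a).mp ha)
  linarith [le_abs_self (a * sinh t), abs_sinh_lt_cosh t]

theorem cosh_sub_mul_sinh_sq_sub_sq (a t : ℝ) :
    (cosh t - a * sinh t) ^ 2 - (a * cosh t - sinh t) ^ 2 = 1 - a ^ 2 := by
  linear_combination (1 - a ^ 2) * cosh_sq_sub_sinh_sq t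

theorem hasDerivAt_cosh_sub_mul_sinh (a t : ℝ) :
    HasDerivAt (fun t => cosh t - a * sinh t) (-(a * cosh t - sinh t)) t :=
  ((hasDerivAt_cosh t).sub ((hasDerivAt_sinh t).const_mul a)).congr_deriv (by ring)

theorem hasDerivAt_mul_cosh_sub_sinh (a t : ℝ) :
    HasDerivAt (fun t => a * cosh t - sinh t) (-(cosh t - a * sinh t)) t :=
  (((hasDerivAt_cosh t).const_mul a).sub (hasDerivAt_sinh t)).congr_deriv (by ring)

theorem hasDerivAt_div_cosh_sub_mul_sinh {a : ℝ} (ha : a ^ 2 ≤ 1) (c t : ℝ) :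
    HasDerivAt (fun t => c / (cosh t - a * sinh t))
      (c / (cosh t - a * sinh t) * ((a * cosh t - sinh t) / (cosh t - a * sinh t))) t := by
  have hD := (cosh_sub_mul_sinh_pos ha t).ne'
  refine ((hasDerivAt_const t c).div (hasDerivAt_cosh_sub_mul_sinh a t) hD).congr_deriv ?_
  field_simp
  ring

theorem hasDerivAt_mul_cosh_sub_sinh_div {a : ℝ} (ha : a ^ 2 ≤ 1) (t : ℝ) :
    HasDerivAt (fun t => (a * cosh t - sinh t) / (cosh t - a * sinh t))
      (-((1 - a ^ 2) / (cosh t - a * sinh t) ^ 2)) t := by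
  have hD := (cosh_sub_mul_sinh_pos ha t).ne'
  refine ((hasDerivAt_mul_cosh_sub_sinh a t).div
    (hasDerivAt_cosh_sub_mul_sinh a t) hD).congr_deriv ?_
  rw [← cosh_sub_mul_sinh_sq_sub_sq a t]
  field_simp
  ring

end Real

theorem hyperbolic_covector_solution_general {m : ℕ} (φ : Fin m → ℝ) (φn : ℝ)
    (hunit : (∑ i, φ i ^ 2) + φn ^ 2 = 1)
    (ψ : Fin m → ℝ → ℝ) (ψn : ℝ → ℝ)
    (hψ : ∀ i t, ψ i t = φ i / (Real.cosh t - φn * Real.sinh t))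
    (hψn : ∀ t, ψn t = (φn * Real.cosh t - Real.sinh t) / (Real.cosh t - φn * Real.sinh t)) :
    (∀ i, ψ i 0 = φ i) ∧ ψn 0 = φn ∧
    (∀ i, ∀ t : ℝ, HasDerivAt (ψ i) (ψ i t * ψn t) t) ∧
    (∀ t : ℝ, HasDerivAt ψn (-(∑ i, ψ i t ^ 2)) t) := by
  have hφn : φn ^ 2 ≤ 1 := by
    linarith [sum_nonneg fun i (_ : i ∈ univ) => sq_nonneg (φ i)]
  obtain rfl : ψ = fun i t => φ i / (cosh t - φn * sinh t) := funext fun i => funext (hψ i)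
  obtain rfl : ψn = fun t => (φn * cosh t - sinh t) / (cosh t - φn * sinh t) := funext hψn
  refine ⟨fun i => by simp, by simp, fun i t => hasDerivAt_div_cosh_sub_mul_sinh hφn (φ i) t,
    fun t => ?_⟩
  have hsum : ∑ i, (φ i / (cosh t - φn * sinh t)) ^ 2
      = (1 - φn ^ 2) / (cosh t - φn * sinh t) ^ 2 := by
    simp only [div_pow, ← sum_div, ← hunit, add_sub_cancel_right]
  rw [hsum]
  exact hasDerivAt_mul_cosh_sub_sinh_div hφn t

/-- The explicit functions `ψ_i(t) = φ_i/(cosh t − φ_n sinh t)` and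
`ψ_n(t) = (φ_n cosh t − sinh t)/(cosh t − φ_n sinh t)` solve the geodesic
covector system for the hyperbolic space group. -/
theorem hyperbolic_covector_solution {m : ℕ} (φ : Fin m → ℝ) (φn : ℝ)
    (hunit : (∑ i, φ i ^ 2) + φn ^ 2 = 1) (hφn : φn ^ 2 < 1)
    (ψ : Fin m → ℝ → ℝ) (ψn : ℝ → ℝ)
    (hψ : ∀ i t, ψ i t = φ i / (Real.cosh t - φn * Real.sinh t))
    (hψn : ∀ t, ψn t = (φn * Real.cosh t - Real.sinh t) / (Real.cosh t - φn * Real.sinh t)) :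
    (∀ i, ψ i 0 = φ i) ∧ ψn 0 = φn ∧
    (∀ i, ∀ t : ℝ, HasDerivAt (ψ i) (ψ i t * ψn t) t) ∧
    (∀ t : ℝ, HasDerivAt ψn (-(∑ i, ψ i t ^ 2)) t) :=
  hyperbolic_covector_solution_general φ φn hunit ψ ψn hψ hψn
end

section
/- Let φ, x, y, γ : ℝ → ℝ be differentiable with cos(γ/2) = sin α cosh φ + β sinh φ and sin(γ/2) = cos α − y sin α − βx, and suppose φ' = sin(γ/2), x' = cos(γ/2) cosh φ, y' = cos(γ/2) sinh φ. Then γ'' = −sin γ (the mathematical pendulum equation). -/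
open Real

/-- The normal geodesic equations on `SH(2)` lead to the mathematical pendulum
equation `γ'' = −sin γ`. -/
theorem sh2_pendulum (α β : ℝ)
    (φ x y γ γ' γ'' : ℝ → ℝ)
    (hγ : ∀ t, HasDerivAt γ (γ' t) t)
    (hγ' : ∀ t, HasDerivAt γ' (γ'' t) t)
    (hc : ∀ t, Real.cos (γ t / 2) = Real.sin α * Real.cosh (φ t) + β * Real.sinh (φ t))
    (hs : ∀ t, Real.sin (γ t / 2) = Real.cos α - y t * Real.sin α - β * x t)
    (hφ : ∀ t, HasDerivAt φ (Real.sin (γ t / 2)) t)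
    (hx : ∀ t, HasDerivAt x (Real.cos (γ t / 2) * Real.cosh (φ t)) t)
    (hy : ∀ t, HasDerivAt y (Real.cos (γ t / 2) * Real.sinh (φ t)) t) :
    ∀ t : ℝ, γ'' t = -Real.sin (γ t) := by
  have hcosD : ∀ t, HasDerivAt (fun t => Real.cos (γ t / 2))
      (-Real.sin (γ t / 2) * (γ' t / 2)) t := fun t => ((hγ t).div_const 2).cos
  have hsinD : ∀ t, HasDerivAt (fun t => Real.sin (γ t / 2))
      (Real.cos (γ t / 2) * (γ' t / 2)) t := fun t => ((hγ t).div_const 2).sin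
  have hcosD2 : ∀ t, HasDerivAt (fun t => Real.cos (γ t / 2))
      (Real.sin α * (Real.sinh (φ t) * Real.sin (γ t / 2))
        + β * (Real.cosh (φ t) * Real.sin (γ t / 2))) t := by
    intro t
    have h := (((hφ t).cosh).const_mul (Real.sin α)).add (((hφ t).sinh).const_mul β)
    have heq : (fun t => Real.cos (γ t / 2))
        = fun t => Real.sin α * Real.cosh (φ t) + β * Real.sinh (φ t) := funext hc
    rw [heq]; exact h
  have hsinD2 : ∀ t, HasDerivAt (fun t => Real.sin (γ t / 2))
      (0 - (Real.cos (γ t / 2) * Real.sinh (φ t)) * Real.sin α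
        - β * (Real.cos (γ t / 2) * Real.cosh (φ t))) t := by
    intro t
    have h2 := ((hasDerivAt_const (𝕜 := ℝ) t (Real.cos α)).sub
      ((hy t).mul_const (Real.sin α))).sub ((hx t).const_mul β)
    have heq : (fun t => Real.sin (γ t / 2))
        = fun t => Real.cos α - y t * Real.sin α - β * x t := funext hs
    rw [heq]; exact h2
  -- γ' = -2 (sin α sinh φ + β cosh φ) pointwise
  have hγ'S : ∀ t, γ' t = -2 * (Real.sin α * Real.sinh (φ t) + β * Real.cosh (φ t)) := by
    intro t
    rcases eq_or_ne (Real.sin (γ t / 2)) 0 with h0 | h0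
    · have hcne : Real.cos (γ t / 2) ≠ 0 := by
        intro hc0
        have := Real.sin_sq_add_cos_sq (γ t / 2)
        rw [h0, hc0] at this; norm_num at this
      have huniq := (hsinD t).unique (hsinD2 t)
      have h3 : Real.cos (γ t / 2) * (γ' t / 2)
          = Real.cos (γ t / 2) * (-(Real.sin α * Real.sinh (φ t) + β * Real.cosh (φ t))) := by
        rw [huniq, hc t]; ring
      have := mul_left_cancel₀ hcne h3
      linarith
    · have huniq := (hcosD t).unique (hcosD2 t)
      have h3 : Real.sin (γ t / 2) * (-(γ' t / 2))
          = Real.sin (γ t / 2) * (Real.sin α * Real.sinh (φ t) + β * Real.cosh (φ t)) := by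
        linear_combination huniq
      have := mul_left_cancel₀ h0 h3
      linarith
  intro t
  have hSD : HasDerivAt (fun t => -2 * (Real.sin α * Real.sinh (φ t) + β * Real.cosh (φ t)))
      (-2 * (Real.sin α * (Real.cosh (φ t) * Real.sin (γ t / 2))
        + β * (Real.sinh (φ t) * Real.sin (γ t / 2)))) t :=
    ((((hφ t).sinh).const_mul (Real.sin α)).add
      (((hφ t).cosh).const_mul β)).const_mul (-2)
  have heq : γ' = fun t => -2 * (Real.sin α * Real.sinh (φ t) + β * Real.cosh (φ t)) :=
    funext hγ'S
  have hfin := (hγ' t).unique (heq ▸ hSD)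
  rw [hfin]
  have hγfull : γ t = 2 * (γ t / 2) := by ring
  rw [hγfull, Real.sin_two_mul, hc t]
  ring
end

section
/- Let φ, x, y, ω : ℝ → ℝ be differentiable with sin(ω/2) = sin α cos φ + β sin φ and cos(ω/2) = cos α + y sin α − βx, and suppose φ' = cos(ω/2), x' = sin(ω/2) cos φ, y' = sin(ω/2) sin φ. Then ω'' = −sin ω. -/
open Real

/-- The normal geodesic equations on `SE(2)` lead to the mathematical pendulum
equation `ω'' = −sin ω`. -/
theorem se2_pendulum (α β : ℝ)
    (φ x y ω ω' ω'' : ℝ → ℝ)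
    (hω : ∀ t, HasDerivAt ω (ω' t) t)
    (hω' : ∀ t, HasDerivAt ω' (ω'' t) t)
    (hs : ∀ t, Real.sin (ω t / 2) = Real.sin α * Real.cos (φ t) + β * Real.sin (φ t))
    (hc : ∀ t, Real.cos (ω t / 2) = Real.cos α + y t * Real.sin α - β * x t)
    (hφ : ∀ t, HasDerivAt φ (Real.cos (ω t / 2)) t)
    (hx : ∀ t, HasDerivAt x (Real.sin (ω t / 2) * Real.cos (φ t)) t)
    (hy : ∀ t, HasDerivAt y (Real.sin (ω t / 2) * Real.sin (φ t)) t) :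
    ∀ t : ℝ, ω'' t = -Real.sin (ω t) := by
  have key : ∀ u, ω' u = 2 * (β * Real.cos (φ u) - Real.sin α * Real.sin (φ u)) := by
    intro u
    have h1 : HasDerivAt (fun t => Real.sin (ω t / 2))
        (Real.cos (ω u / 2) * (ω' u / 2)) u := ((hω u).div_const 2).sin
    have h2 : HasDerivAt (fun t => Real.sin α * Real.cos (φ t) + β * Real.sin (φ t))
        (Real.sin α * (-Real.sin (φ u) * Real.cos (ω u / 2)) +
          β * (Real.cos (φ u) * Real.cos (ω u / 2))) u :=
      (((hφ u).cos).const_mul (Real.sin α)).add (((hφ u).sin).const_mul β)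
    have h1' : HasDerivAt (fun t => Real.sin α * Real.cos (φ t) + β * Real.sin (φ t))
        (Real.cos (ω u / 2) * (ω' u / 2)) u := by
      have : (fun t => Real.sin (ω t / 2)) =
          (fun t => Real.sin α * Real.cos (φ t) + β * Real.sin (φ t)) := funext hs
      rwa [this] at h1
    have e1 := h1'.unique h2
    have h3 : HasDerivAt (fun t => Real.cos (ω t / 2))
        (-Real.sin (ω u / 2) * (ω' u / 2)) u := ((hω u).div_const 2).cos
    have h4 : HasDerivAt (fun t => Real.cos α + y t * Real.sin α - β * x t)
        ((0 + Real.sin (ω u / 2) * Real.sin (φ u) * Real.sin α) -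
          β * (Real.sin (ω u / 2) * Real.cos (φ u))) u :=
      ((hasDerivAt_const u (Real.cos α)).add ((hy u).mul_const (Real.sin α))).sub
        ((hx u).const_mul β)
    have h3' : HasDerivAt (fun t => Real.cos α + y t * Real.sin α - β * x t)
        (-Real.sin (ω u / 2) * (ω' u / 2)) u := by
      have : (fun t => Real.cos (ω t / 2)) =
          (fun t => Real.cos α + y t * Real.sin α - β * x t) := funext hc
      rwa [this] at h3
    have e2 := h3'.unique h4
    have pyth := Real.sin_sq_add_cos_sq (ω u / 2)
    linear_combination (2 * Real.cos (ω u / 2)) * e1 - (2 * Real.sin (ω u / 2)) * e2 -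
      (ω' u - 2 * (β * Real.cos (φ u) - Real.sin α * Real.sin (φ u))) * pyth
  intro t
  have hωf : ω' = fun u => 2 * (β * Real.cos (φ u) - Real.sin α * Real.sin (φ u)) :=
    funext key
  have h5 : HasDerivAt (fun u => 2 * (β * Real.cos (φ u) - Real.sin α * Real.sin (φ u)))
      (2 * (β * (-Real.sin (φ t) * Real.cos (ω t / 2)) -
        Real.sin α * (Real.cos (φ t) * Real.cos (ω t / 2)))) t :=
    ((((hφ t).cos).const_mul β).sub (((hφ t).sin).const_mul (Real.sin α))).const_mul 2
  have h6 : HasDerivAt (fun u => 2 * (β * Real.cos (φ u) - Real.sin α * Real.sin (φ u)))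
      (ω'' t) t := by rw [← hωf]; exact hω' t
  have e3 := h6.unique h5
  have hst := hs t
  have hdbl : Real.sin (ω t) = 2 * Real.sin (ω t / 2) * Real.cos (ω t / 2) := by
    rw [← Real.sin_two_mul]; ring_nf
  rw [e3]
  linear_combination hdbl + 2 * Real.cos (ω t / 2) * hst
end
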